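/- arXiv:2511.12736 — 2 statements merged into one kernel-verified Lean document; each statement's English description precedes it below -/
import Mathlib

section
/- Let T be a nonspecial ω₁-tree with the property that for every X ⊆ ω₁, T↾X ∈ NS^T if and only if X is nonstationary in ω₁. Then ◊ and ◊_T are equivalent. -/
/-!
`◊ → ◊_T`: code each node `t` by the countable ordinal `ω * ht t + n`, where `n` indexes `t`
within its level. For `α` in the club of fixed points of `ω * ·`, every node of height `< α` has
code `< α`, so a `◊`-sequence that guesses the code of `X ⊆ T` at `α = ht t` guesses `X ∩ t↓`.
Such `t` fill `T ↾ S` for a stationary `S`, which is not in `NS^T`.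

`◊_T → ◊`: applying `◊_T` to `T ↾ X` shows that, for stationarily many `α`, the set `X ∩ α` is
one of the countably many sets `ht '' D t` with `ht t = α`. Kunen's argument turns countably
many guesses into a single one: if the `n`-th candidate fails for `X n`, the set
`⋃ n, {ω * ξ + n | ξ ∈ X n}` cannot be guessed either.
-/

open Set

/-- The first uncountable ordinal `ω₁`. -/
noncomputable def omega1 : Ordinal := Ordinal.omega 1

section TreeDefs

variable {T : Type*} [PartialOrder T]

/-- In a tree, the set of strict predecessors of any node is linearly ordered. -/
def PredsChain (T : Type*) [PartialOrder T] : Prop :=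
  ∀ t : T, IsChain (· ≤ ·) {s : T | s < t}

/-- `ht` is *the* height function of the tree: it is strictly monotone on comparable pairs and
the heights of the strict predecessors of `t` are exactly the ordinals below `ht t`; together
with `PredsChain` this says that the set `t↓` of strict predecessors of `t` is well-ordered
with order type `ht t`. -/
def IsHeightFun (ht : T → Ordinal) : Prop :=
  (∀ s t : T, s < t → ht s < ht t) ∧
  ∀ t : T, ∀ o : Ordinal, o < ht t → ∃ s : T, s < t ∧ ht s = o

/-- The tree has height `ω₁`: every node has height `< ω₁` and every countable ordinal is the
height of some node. -/
def HeightOmega1 (ht : T → Ordinal) : Prop :=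
  (∀ t : T, ht t < omega1) ∧ ∀ o : Ordinal, o < omega1 → ∃ t : T, ht t = o

/-- All levels of the tree are countable. -/
def CountableLevels (ht : T → Ordinal) : Prop :=
  ∀ o : Ordinal, {t : T | ht t = o}.Countable

/-- A tree of height `ω₁` is well-pruned if every node has successors in all later levels. -/
def WellPruned (ht : T → Ordinal) : Prop :=
  ∀ o o' : Ordinal, o < o' → o' < omega1 →
    ∀ s : T, ht s = o → ∃ t : T, s < t ∧ ht t = o'

/-- A special subset of a tree: a union of countably many antichains. -/
def IsSpecialSet (U : Set T) : Prop :=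
  ∃ A : ℕ → Set T, (∀ n : ℕ, IsAntichain (· ≤ ·) (A n)) ∧ U ⊆ ⋃ n, A n

/-- Membership in the ideal `NS^T`: there is a regressive map on `B` all of whose fibers
are special. -/
def InNS [OrderBot T] (B : Set T) : Prop :=
  ∃ f : T → T, (∀ t ∈ B, t ≠ ⊥ → f t < t) ∧
    ∀ t : T, IsSpecialSet {s : T | s ∈ B ∧ f s = t}

/-- The diamond principle `◊_T` for a tree `T`. -/
def DiamondTree (T : Type*) [PartialOrder T] [OrderBot T] : Prop :=
  ∃ D : T → Set T, (∀ t : T, D t ⊆ Set.Iio t) ∧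
    ∀ X : Set T, ¬ InNS {t : T | X ∩ Set.Iio t = D t}

end TreeDefs

/-- Club subsets of `ω₁`: closed and unbounded in `ω₁`. -/
def IsClubIn (C : Set Ordinal) : Prop :=
  C ⊆ Set.Iio omega1 ∧
  (∀ o : Ordinal, o < omega1 → ∃ b ∈ C, o < b) ∧
  ∀ o : Ordinal, o < omega1 → (C ∩ Set.Iio o).Nonempty →
    IsLUB (C ∩ Set.Iio o) o → o ∈ C

/-- Stationary subsets of `ω₁`: sets meeting every club. -/
def IsStationaryIn (S : Set Ordinal) : Prop :=
  ∀ C : Set Ordinal, IsClubIn C → (S ∩ C).Nonempty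

/-- The diamond principle `◊(S)` for `S ⊆ ω₁`;  `◊` is `DiamondOn (Set.Iio omega1)`. -/
def DiamondOn (S : Set Ordinal) : Prop :=
  ∃ D : Ordinal → Set Ordinal, (∀ o ∈ S, D o ⊆ Set.Iio o) ∧
    ∀ X : Set Ordinal, X ⊆ Set.Iio omega1 →
      IsStationaryIn {o ∈ S | X ∩ Set.Iio o = D o}

open Ordinal Cardinal

universe u v

theorem omega0_mul_add_natCast_lt_omega1 {ξ : Ordinal} (hξ : ξ < omega1) (n : ℕ) :
    ω * ξ + n < omega1 :=
  isPrincipal_add_omega 1 (isPrincipal_mul_omega 1 omega0_lt_omega_one hξ)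
    ((natCast_lt_omega0 n).trans omega0_lt_omega_one)

theorem omega0_mul_add_natCast_inj {ξ ξ' : Ordinal} {m m' : ℕ}
    (h : ω * ξ + m = ω * ξ' + m') : ξ = ξ' ∧ m = m' := by
  have hdiv := congrArg (· / ω) h
  have hmod := congrArg (· % ω) h
  simp only [mul_add_div _ omega0_ne_zero, div_eq_zero_of_lt (natCast_lt_omega0 _), add_zero,
    mul_add_mod_self, mod_eq_of_lt (natCast_lt_omega0 _), Nat.cast_inj] at hdiv hmod
  exact ⟨hdiv, hmod⟩

theorem omega0_mul_add_natCast_lt_of_omega0_mul_eq {α ξ : Ordinal} (hα : ω * α = α) (hξ : ξ < α)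
    (n : ℕ) : ω * ξ + n < α :=
  calc ω * ξ + n < ω * ξ + ω := add_lt_add_right (natCast_lt_omega0 n) _
    _ = ω * (ξ + 1) := (mul_add_one _ _).symm
    _ ≤ ω * α := mul_le_mul_right (Order.add_one_le_iff.2 hξ) _
    _ = α := hα

namespace InitialSeg

section LinearOrder

variable {α β : Type*} [LinearOrder α] [LinearOrder β] (f : α ≤i β)

theorem isLUB_image_iff {s : Set α} {a : α} : IsLUB (f '' s) (f a) ↔ IsLUB s a := by
  refine ⟨fun h => ⟨fun x hx => f.le_iff_le.1 (h.1 ⟨x, hx, rfl⟩), fun b hb => ?_⟩,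
    fun h => ⟨?_, fun b hb => ?_⟩⟩
  · exact f.le_iff_le.1 (h.2 (by rintro _ ⟨x, hx, rfl⟩; exact f.le_iff_le.2 (hb hx)))
  · rintro _ ⟨x, hx, rfl⟩
    exact f.le_iff_le.2 (h.1 hx)
  · by_contra! hlt
    obtain ⟨b, rfl⟩ := f.mem_range_of_le hlt.le
    exact hlt.not_ge (f.le_iff_le.2 (h.2 fun x hx => f.le_iff_le.1 (hb ⟨x, hx, rfl⟩)))

theorem image_inter_Iio (s : Set α) (a : α) : f '' (s ∩ Iio a) = f '' s ∩ Iio (f a) := by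
  rw [image_inter (f := f) fun _ _ => f.inj.1, f.image_Iio]

theorem image_preimage_inter_Iio (s : Set β) (a : α) :
    f '' (f ⁻¹' s ∩ Iio a) = s ∩ Iio (f a) := by
  have : Iio (f a) ⊆ range f := fun _ hb => f.mem_range_of_le (le_of_lt hb)
  rw [image_inter_Iio, image_preimage_eq_inter_range, inter_assoc, inter_eq_right.2 this]

end LinearOrder

theorem lt_omega1_iff (f : Ordinal.{u} ≤i Ordinal.{v}) (hf : f omega1 = omega1) {o : Ordinal} :
    f o < omega1 ↔ o < omega1 := by
  rw [← hf, f.lt_iff_lt]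

theorem mem_range_of_lt_omega1 (f : Ordinal.{u} ≤i Ordinal.{v}) (hf : f omega1 = omega1)
    {o : Ordinal} (ho : o < omega1) : o ∈ range f :=
  f.mem_range_of_le (hf ▸ ho.le)

end InitialSeg

theorem isClubIn_iff_isClub {C : Set Ordinal} :
    IsClubIn C ↔ C ⊆ Iio omega1 ∧ IsClub ((↑) ⁻¹' C : Set (Iio omega1)) := by
  have hlub {d : Set (Iio omega1)} {a : Iio omega1} : IsLUB (Subtype.val '' d) a ↔ IsLUB d a :=
    (Set.principalSegIio omega1 : Iio omega1 ≤i Ordinal).isLUB_image_iff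
  rw [IsClubIn, isClub_iff, dirSupClosed_iff_of_linearOrder]
  refine and_congr_right fun hC => and_comm.trans (and_congr ⟨fun h d hd hne a hda => ?_,
    fun h o ho hne hlub' => ?_⟩ ⟨fun h o => ?_, fun h o ho => ?_⟩)
  · rw [← hlub] at hda
    by_cases hmem : a.1 ∈ Subtype.val '' d
    · obtain ⟨x, hx, hxa⟩ := hmem
      exact Subtype.ext hxa ▸ hd hx
    obtain ⟨x, hx⟩ := hne
    have hlt {y : Iio omega1} (hy : y ∈ d) : y.1 < a :=
      (hda.1 ⟨y, hy, rfl⟩).lt_of_ne fun h => hmem ⟨y, hy, h⟩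
    refine h a a.2 ⟨x, hd hx, hlt hx⟩ ⟨fun y hy => le_of_lt hy.2, fun b hb => hda.2 ?_⟩
    rintro _ ⟨y, hy, rfl⟩
    exact hb ⟨hd hy, hlt hy⟩
  · obtain ⟨x, hx⟩ := hne
    refine h (d := Subtype.val ⁻¹' (C ∩ Iio o)) (fun x hx => hx.1) ⟨⟨x, hC hx.1⟩, hx⟩ (a := ⟨o, ho⟩)
      (hlub.1 ?_)
    rwa [Subtype.image_preimage_coe, inter_eq_right.2 (inter_subset_left.trans hC)]
  · obtain ⟨b, hb, hob⟩ := h o o.2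
    exact ⟨⟨b, hC hb⟩, hb, hob.le⟩
  · obtain ⟨b, hb, hob⟩ := h ⟨o + 1, (isSuccLimit_omega 1).succ_lt ho⟩
    exact ⟨b, hb, Order.add_one_le_iff.1 hob⟩

theorem cof_Iio_omega1_ne_aleph0 : Order.cof (Iio omega1) ≠ ℵ₀ := by
  rw [Ordinal.cof_Iio, omega1, lift_omega, Ordinal.lift_one, cof_omega_one]
  exact aleph0_lt_aleph_one.ne'

theorem IsClubIn.iInter {ι : Sort*} [Countable ι] [Nonempty ι] {C : ι → Set Ordinal}
    (hC : ∀ i, IsClubIn (C i)) : IsClubIn (⋂ i, C i) := by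
  simp only [isClubIn_iff_isClub, preimage_iInter] at hC ⊢
  exact ⟨(iInter_subset _ (Classical.arbitrary ι)).trans (hC _).1,
    .iInter_of_countable cof_Iio_omega1_ne_aleph0 fun i => (hC i).2⟩

theorem IsClubIn.inter {C C' : Set Ordinal} (hC : IsClubIn C) (hC' : IsClubIn C') :
    IsClubIn (C ∩ C') := by
  rw [inter_eq_iInter]
  exact .iInter fun b => by cases b <;> assumption

theorem IsStationaryIn.inter_isClubIn {S C : Set Ordinal} (hS : IsStationaryIn S)
    (hC : IsClubIn C) : IsStationaryIn (S ∩ C) := fun C' hC' => by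
  simpa only [inter_assoc] using hS _ (hC.inter hC')

theorem IsStationaryIn.mono {S S' : Set Ordinal} (hS : IsStationaryIn S) (h : S ⊆ S') :
    IsStationaryIn S' := fun C hC => (hS C hC).mono (inter_subset_inter_left C h)

theorem isClubIn_fixedPoints {f : Ordinal → Ordinal} (hf : Order.IsNormal f)
    (hω : ∀ o < omega1, f o < omega1) : IsClubIn (Iio omega1 ∩ Function.fixedPoints f) := by
  refine ⟨inter_subset_left, fun o ho => ?_, fun o ho hne hlub => ⟨ho, ?_⟩⟩
  · have hsucc : o + 1 < omega1 := (isSuccLimit_omega 1).succ_lt ho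
    refine ⟨nfp f (o + 1), ⟨nfp_lt_ord ?_ hω hsucc, nfp_fp hf _⟩,
      (Order.lt_add_one_iff.2 le_rfl).trans_le (le_nfp f _)⟩
    simp [omega1, cof_omega_one]
  · have := hf.map_isLUB hlub hne
    rw [image_congr fun x hx => hx.1.2, image_id'] at this
    exact this.unique hlub

theorem isClubIn_fixedPoints_omega0_mul : IsClubIn (Iio omega1 ∩ Function.fixedPoints (ω * ·)) :=
  isClubIn_fixedPoints (isNormal_mul_right omega0_pos)
    fun _ ho => isPrincipal_mul_omega 1 omega0_lt_omega_one ho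

section InitialSegOmega1

variable {f : Ordinal.{u} ≤i Ordinal.{v}}

theorem IsClubIn.preimage_initialSeg (hf : f omega1 = omega1) {C : Set Ordinal.{v}}
    (hC : IsClubIn C) : IsClubIn (f ⁻¹' C) := by
  refine ⟨fun a ha => (f.lt_omega1_iff hf).1 (hC.1 ha), fun o ho => ?_,
    fun o ho hne hlub => ?_⟩
  · obtain ⟨b', hb', hob'⟩ := hC.2.1 (f o) ((f.lt_omega1_iff hf).2 ho)
    obtain ⟨b, rfl⟩ := f.mem_range_of_lt_omega1 hf (hC.1 hb')
    exact ⟨b, hb', f.lt_iff_lt.1 hob'⟩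
  · rw [← f.isLUB_image_iff, f.image_preimage_inter_Iio] at hlub
    rw [← image_nonempty, f.image_preimage_inter_Iio] at hne
    exact hC.2.2 _ ((f.lt_omega1_iff hf).2 ho) hne hlub

theorem IsClubIn.image_initialSeg (hf : f omega1 = omega1) {C : Set Ordinal.{u}}
    (hC : IsClubIn C) : IsClubIn (f '' C) := by
  refine ⟨?_, fun o' ho' => ?_, fun o' ho' hne hlub => ?_⟩
  · rintro _ ⟨a, ha, rfl⟩
    exact (f.lt_omega1_iff hf).2 (hC.1 ha)
  · obtain ⟨o, rfl⟩ := f.mem_range_of_lt_omega1 hf ho'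
    obtain ⟨b, hb, hob⟩ := hC.2.1 o ((f.lt_omega1_iff hf).1 ho')
    exact ⟨f b, mem_image_of_mem f hb, f.lt_iff_lt.2 hob⟩
  · obtain ⟨o, rfl⟩ := f.mem_range_of_lt_omega1 hf ho'
    rw [← f.image_inter_Iio, f.isLUB_image_iff] at hlub
    rw [← f.image_inter_Iio, image_nonempty] at hne
    exact mem_image_of_mem f (hC.2.2 o ((f.lt_omega1_iff hf).1 ho') hne hlub)

theorem isStationaryIn_image_initialSeg_iff (hf : f omega1 = omega1) {S : Set Ordinal.{u}} :
    IsStationaryIn (f '' S) ↔ IsStationaryIn S := by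
  refine ⟨fun h C hC => ?_, fun h C hC => ?_⟩
  · obtain ⟨_, ⟨a, ha, rfl⟩, b, hb, hab⟩ := h _ (hC.image_initialSeg hf)
    exact ⟨a, ha, f.inj.1 hab ▸ hb⟩
  · obtain ⟨a, ha, haC⟩ := h _ (hC.preimage_initialSeg hf)
    exact ⟨f a, mem_image_of_mem f ha, haC⟩

end InitialSegOmega1

theorem diamondOn_iff_of_initialSeg {f : Ordinal.{u} ≤i Ordinal.{v}} (hf : f omega1 = omega1) :
    DiamondOn (Iio (omega1 : Ordinal.{v})) ↔ DiamondOn (Iio (omega1 : Ordinal.{u})) := by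
  refine ⟨fun ⟨D', hD'sub, hD'⟩ => ⟨fun o => f ⁻¹' D' (f o), fun o ho a ha => ?_, fun X hX => ?_⟩,
    fun ⟨D, hDsub, hD⟩ => ⟨fun o' => ⋃ (o) (_ : f o = o'), f '' D o, ?_, fun X' hX' => ?_⟩⟩
  · exact f.lt_iff_lt.1 (hD'sub _ ((f.lt_omega1_iff hf).2 ho) ha)
  · rw [← isStationaryIn_image_initialSeg_iff hf]
    refine (hD' (f '' X) ?_).mono ?_
    · rintro _ ⟨a, ha, rfl⟩
      exact (f.lt_omega1_iff hf).2 (hX ha)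
    · rintro o' ⟨ho', heq⟩
      obtain ⟨o, rfl⟩ := f.mem_range_of_lt_omega1 hf ho'
      refine ⟨o, ⟨(f.lt_omega1_iff hf).1 ho', ?_⟩, rfl⟩
      change X ∩ Iio o = f ⁻¹' D' (f o)
      rw [← heq, ← f.image_inter_Iio, preimage_image_eq _ fun _ _ => f.inj.1]
  · simp only [mem_Iio, iUnion_subset_iff]
    rintro _ ho' o rfl _ ⟨a, ha, rfl⟩
    exact f.lt_iff_lt.2 (hDsub o ((f.lt_omega1_iff hf).1 ho') ha)
  · refine ((isStationaryIn_image_initialSeg_iff hf).2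
      (hD (f ⁻¹' X') fun a ha => (f.lt_omega1_iff hf).1 (hX' ha))).mono ?_
    rintro _ ⟨o, ⟨ho, heq⟩, rfl⟩
    refine ⟨(f.lt_omega1_iff hf).2 ho, ?_⟩
    change X' ∩ Iio (f o) = ⋃ (o') (_ : f o' = f o), f '' D o'
    simp only [f.inj, iUnion_iUnion_eq_left, ← heq, f.image_preimage_inter_Iio]

theorem liftInitialSeg_omega1 : liftInitialSeg.{v, u} omega1 = omega1 := by
  simp [omega1]

-- The `◊` of the main theorem lives on ordinals of a universe unrelated to that of the heights.
theorem diamondOn_iff_of_univ :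
    DiamondOn (Iio (omega1 : Ordinal.{u})) ↔ DiamondOn (Iio (omega1 : Ordinal.{v})) :=
  (diamondOn_iff_of_initialSeg liftInitialSeg_omega1.{u, v}).symm.trans
    (diamondOn_iff_of_initialSeg liftInitialSeg_omega1.{v, u})

/-- Kunen: countably many guesses at each level already give `◊`. -/
theorem diamondOn_of_countable_guesses (A : Ordinal.{u} → Set (Set Ordinal.{u}))
    (hA : ∀ α, (A α).Countable)
    (hguess : ∀ X ⊆ Iio omega1, IsStationaryIn {α ∈ Iio omega1 | X ∩ Iio α ∈ A α}) :
    DiamondOn (Iio (omega1 : Ordinal.{u})) := by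
  choose g hg using fun α => countable_iff_exists_subset_range.1 (hA α)
  by_contra hno
  have hfail (n : ℕ) : ∃ X ⊆ Iio omega1, ∃ C, IsClubIn C ∧
      ∀ α ∈ C, X ∩ Iio α ≠ {ξ | ξ < α ∧ ω * ξ + n ∈ g α n} := by
    by_contra! h
    refine hno ⟨fun α => {ξ | ξ < α ∧ ω * ξ + n ∈ g α n}, fun _ _ _ hξ => hξ.1, fun X hX C hC => ?_⟩
    obtain ⟨α, hαC, hα⟩ := h X hX C hC
    exact ⟨α, ⟨hC.1 hαC, hα⟩, hαC⟩
  choose X hX C hC hXC using hfail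
  set Y := ⋃ n : ℕ, (fun ξ => ω * ξ + n) '' X n
  have hY : Y ⊆ Iio omega1 := iUnion_subset fun n => by
    rintro _ ⟨ξ, hξ, rfl⟩
    exact omega0_mul_add_natCast_lt_omega1 (hX n hξ) n
  obtain ⟨α, ⟨-, hYα⟩, ⟨-, hαfix⟩, hαC⟩ :=
    hguess Y hY _ (isClubIn_fixedPoints_omega0_mul.inter (.iInter hC))
  obtain ⟨n, hn⟩ := hg α hYα
  refine hXC n α (mem_iInter.1 hαC n) (ext fun ξ => ⟨fun ⟨hξX, hξα⟩ => ⟨hξα, ?_⟩, ?_⟩)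
  · rw [hn]
    exact ⟨mem_iUnion.2 ⟨n, ξ, hξX, rfl⟩, omega0_mul_add_natCast_lt_of_omega0_mul_eq hαfix hξα n⟩
  · rintro ⟨hξα, hξY⟩
    rw [hn] at hξY
    obtain ⟨m, ξ', hξ', heq⟩ := mem_iUnion.1 hξY.1
    obtain ⟨rfl, rfl⟩ := omega0_mul_add_natCast_inj heq
    exact ⟨hξ', hξα⟩

theorem IsSpecialSet.mono {T : Type*} [PartialOrder T] {U V : Set T} (hV : IsSpecialSet V)
    (h : U ⊆ V) : IsSpecialSet U :=
  let ⟨A, hA, hVA⟩ := hV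
  ⟨A, hA, h.trans hVA⟩

theorem InNS.mono {T : Type*} [PartialOrder T] [OrderBot T] {B B' : Set T} (hB' : InNS B')
    (h : B ⊆ B') : InNS B :=
  let ⟨f, hreg, hfib⟩ := hB'
  ⟨f, fun t ht => hreg t (h ht), fun t => (hfib t).mono fun _ hs => ⟨h hs.1, hs.2⟩⟩

section Tree

variable {T : Type*} [PartialOrder T] {ht : T → Ordinal.{u}}

theorem IsHeightFun.image_inter_Iio (hht : IsHeightFun ht) (X : Set Ordinal) (t : T) :
    ht '' ({s | ht s ∈ X} ∩ Iio t) = X ∩ Iio (ht t) := by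
  ext β
  refine ⟨?_, fun ⟨hβX, hβt⟩ => ?_⟩
  · rintro ⟨s, ⟨hsX, hst⟩, rfl⟩
    exact ⟨hsX, hht.1 s t hst⟩
  · obtain ⟨s, hst, rfl⟩ := hht.2 t β hβt
    exact ⟨s, ⟨hβX, hst⟩, rfl⟩

theorem diamondOn_of_diamondTree [OrderBot T] (hht : IsHeightFun ht) (hlt : ∀ t, ht t < omega1)
    (hlev : CountableLevels ht)
    (hns : ∀ S ⊆ Iio omega1, ¬ IsStationaryIn S → InNS {t | ht t ∈ S})
    (hT : DiamondTree T) : DiamondOn (Iio (omega1 : Ordinal.{u})) := by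
  obtain ⟨D, -, hD⟩ := hT
  refine diamondOn_of_countable_guesses (fun α => (fun t => ht '' D t) '' {t | ht t = α})
    (fun α => (hlev α).image _) fun X _ => ?_
  by_contra hX
  refine hD {t | ht t ∈ X} ((hns _ (fun _ hα => hα.1) hX).mono fun t (htX : _ = _) => ?_)
  exact ⟨hlt t, t, rfl, show ht '' D t = _ by rw [← htX, hht.image_inter_Iio]⟩

theorem diamondTree_of_diamondOn [OrderBot T] (hmono : StrictMono ht) (hlt : ∀ t, ht t < omega1)
    (hlev : CountableLevels ht)
    (hNS : ∀ S ⊆ Iio omega1, InNS {t | ht t ∈ S} → ¬ IsStationaryIn S)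
    (h : DiamondOn (Iio (omega1 : Ordinal.{u}))) : DiamondTree T := by
  obtain ⟨D, -, hD⟩ := h
  choose G hG using fun α => countable_iff_exists_injOn.1 (hlev α)
  set e : T → Ordinal := fun t => ω * ht t + G (ht t) t
  have he : Function.Injective e := fun t t' htt' => by
    obtain ⟨hh, hG'⟩ := omega0_mul_add_natCast_inj htt'
    exact hG (ht t) rfl hh.symm (hh ▸ hG')
  refine ⟨fun t => {s | s < t ∧ e s ∈ D (ht t)}, fun t s hs => hs.1, fun X hX => ?_⟩
  have hS := (hD (e '' X) (image_subset_iff.2 fun t _ =>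
    omega0_mul_add_natCast_lt_omega1 (hlt t) _)).inter_isClubIn isClubIn_fixedPoints_omega0_mul
  refine hNS _ (fun α hα => hα.1.1) ?_ hS
  refine hX.mono fun t ⟨⟨_, hguess⟩, _, hfix⟩ => ?_
  show X ∩ Iio t = {s | s < t ∧ e s ∈ D (ht t)}
  rw [← hguess]
  ext s
  refine ⟨fun ⟨hsX, hst⟩ => ⟨hst, mem_image_of_mem e hsX, ?_⟩, fun ⟨hst, hsX, _⟩ => ⟨?_, hst⟩⟩
  · exact omega0_mul_add_natCast_lt_of_omega0_mul_eq hfix (hmono hst) _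
  · exact he.mem_set_image.1 hsX

end Tree

theorem stmt16_general {T : Type*} [PartialOrder T] [OrderBot T]
    (ht : T → Ordinal)
    (hht : IsHeightFun ht) (hΩ : HeightOmega1 ht) (hlev : CountableLevels ht)
    (hchar : ∀ X : Set Ordinal, X ⊆ Set.Iio omega1 →
      (InNS {t : T | ht t ∈ X} ↔ ¬ IsStationaryIn X)) :
    DiamondOn (Set.Iio omega1) ↔ DiamondTree T :=
  diamondOn_iff_of_univ.trans
    ⟨diamondTree_of_diamondOn (fun s t => hht.1 s t) hΩ.1 hlev fun S hS => (hchar S hS).1,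
      diamondOn_of_diamondTree hht hΩ.1 hlev fun S hS => (hchar S hS).2⟩

/-- Let `T` be a nonspecial `ω₁`-tree such that for every `X ⊆ ω₁`,
`T ↾ X ∈ NS^T` if and only if `X` is nonstationary in `ω₁`. Then `◊` and `◊_T`
are equivalent. -/
theorem stmt16 {T : Type*} [PartialOrder T] [OrderBot T]
    (hchain : PredsChain T) (ht : T → Ordinal)
    (hht : IsHeightFun ht) (hΩ : HeightOmega1 ht) (hlev : CountableLevels ht)
    (hns : ¬ IsSpecialSet (Set.univ : Set T))
    (hchar : ∀ X : Set Ordinal, X ⊆ Set.Iio omega1 →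
      (InNS {t : T | ht t ∈ X} ↔ ¬ IsStationaryIn X)) :
    DiamondOn (Set.Iio omega1) ↔ DiamondTree T :=
  stmt16_general ht hht hΩ hlev hchar
end

section
/- Let T be an almost-Suslin ω₁-tree. Then for every X ⊆ ω₁, T↾X ∈ NS^T if and only if X is nonstationary in ω₁. -/
open Set

/-!
If `f` witnesses `T ↾ X ∈ NS^T` with fibers `⋃ₙ A t n`, each antichain `A t n` has its heights
outside some club `C t n`. Since only countably many nodes lie below any countable height,
the diagonal intersection of all the `C t n` is still a club, and a node `t` of height
`δ ∈ X` in it would lie in some `A (f t) n` although `f t` sits below height `δ`; so `X` is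
nonstationary. Conversely, if `X` misses a club `C`, send `t` to its predecessor at height
`sup (C ∩ ht t)`: the fiber over `s` lies below the first point of `C` above `ht s`, so it is
countable.
-/

open Ordinal

section Omega1

lemma omega1_isSuccLimit : Order.IsSuccLimit omega1 := Cardinal.isSuccLimit_omega 1

lemma countable_Iio_of_lt_omega1 {o : Ordinal} (h : o < omega1) : (Iio o).Countable := by
  rw [← Cardinal.le_aleph0_iff_set_countable, Cardinal.mk_Iio_ordinal, Cardinal.lift_le_aleph0,
    ← Order.lt_succ_iff, Cardinal.succ_aleph0, ← Cardinal.lt_ord, Cardinal.ord_aleph]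
  exact h

lemma countable_Iic_of_lt_omega1 {o : Ordinal} (h : o < omega1) : (Iic o).Countable := by
  rw [← Order.Iio_succ]
  exact countable_Iio_of_lt_omega1 (omega1_isSuccLimit.succ_lt h)

lemma sSup_lt_omega1 {S : Set Ordinal} (hc : S.Countable) (hS : ∀ o ∈ S, o < omega1) :
    sSup S < omega1 := by
  have := hc.to_subtype
  rw [sSup_eq_iSup']
  exact iSup_lt_omega_one fun o => hS o o.2

lemma exists_gt_forall_lt_apply_lt {F : Ordinal → Ordinal} (hF : ∀ β < omega1, F β < omega1)
    {o : Ordinal} (ho : o < omega1) : ∃ δ < omega1, o < δ ∧ ∀ β < δ, F β < δ := by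
  set G : Ordinal → Ordinal := fun β => Order.succ (β ⊔ sSup (F '' Iic β))
  have hG : ∀ β < omega1, G β < omega1 := fun β hβ =>
    omega1_isSuccLimit.succ_lt <| max_lt hβ <| sSup_lt_omega1
      ((countable_Iic_of_lt_omega1 hβ).image F)
      (forall_mem_image.2 fun γ hγ => hF γ (lt_of_le_of_lt hγ hβ))
  have hFG : ∀ γ β, γ ≤ β → F γ < G β := fun γ β h =>
    Order.lt_succ_of_le (le_sup_of_le_right (le_csSup bddAbove_of_small (mem_image_of_mem F h)))
  refine ⟨nfp G o, nfp_lt_ord ?_ hG ho,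
    (Order.lt_succ_of_le le_sup_left).trans_le (iterate_le_nfp G o 1), fun β hβ => ?_⟩
  · rw [omega1, Cardinal.cof_omega_one]
    exact Cardinal.aleph0_lt_aleph_one
  · obtain ⟨n, hn⟩ := lt_nfp_iff.1 hβ
    refine (hFG β _ hn.le).trans_le ?_
    simpa only [Function.iterate_succ_apply'] using iterate_le_nfp G o (n + 1)

end Omega1

section Clubs

variable {C : Set Ordinal}

lemma IsClubIn.mem_of_cofinal (hC : IsClubIn C) {δ : Ordinal} (hδ : δ < omega1) (hδ0 : 0 < δ)
    (h : ∀ β < δ, ∃ c ∈ C, β < c ∧ c < δ) : δ ∈ C := by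
  obtain ⟨c, hc, -, hcδ⟩ := h 0 hδ0
  refine hC.2.2 δ hδ ⟨c, hc, hcδ⟩ ⟨fun x hx => hx.2.le, fun b hb => not_lt.1 fun hbδ => ?_⟩
  obtain ⟨c', hc', hbc', hc'δ⟩ := h b hbδ
  exact (hb ⟨hc', hc'δ⟩).not_gt hbc'

lemma IsClubIn.inter_Ioi (hC : IsClubIn C) {a : Ordinal} (ha : a < omega1) :
    IsClubIn (C ∩ Ioi a) := by
  refine ⟨fun x hx => hC.1 hx.1, fun o ho => ?_, fun o ho hne hlub => ?_⟩
  · obtain ⟨b, hb, hob⟩ := hC.2.1 (max o a) (max_lt ho ha)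
    exact ⟨b, ⟨hb, (le_max_right _ _).trans_lt hob⟩, (le_max_left _ _).trans_lt hob⟩
  · obtain ⟨d, ⟨-, had⟩, hdo⟩ := hne
    have hao : a < o := had.trans hdo
    refine ⟨hC.mem_of_cofinal ho ((zero_le (a := a)).trans_lt hao) fun β hβ => ?_, hao⟩
    obtain ⟨c, ⟨⟨hc, -⟩, hco⟩, hβc, -⟩ := hlub.exists_between hβ
    exact ⟨c, hc, hβc, hco⟩

lemma isClubIn_diagonal {ι : Type*} (r : ι → Ordinal)
    (hr : ∀ β < omega1, {i | r i ≤ β}.Countable) {C : ι → Set Ordinal}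
    (hC : ∀ i, IsClubIn (C i)) :
    IsClubIn {δ | δ < omega1 ∧ ∀ i, r i < δ → δ ∈ C i} := by
  refine ⟨fun δ hδ => hδ.1, fun o ho => ?_, fun o ho hne hlub => ⟨ho, fun i hi => ?_⟩⟩
  · have hnext : ∀ i, ∀ β < omega1, sInf (C i ∩ Ioi β) ∈ C i ∩ Ioi β := fun i β hβ =>
      csInf_mem ((hC i).2.1 β hβ)
    set F : Ordinal → Ordinal := fun β => sSup ((fun i => sInf (C i ∩ Ioi β)) '' {i | r i ≤ β})
    have hF : ∀ β < omega1, F β < omega1 := fun β hβ =>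
      sSup_lt_omega1 ((hr β hβ).image _) (forall_mem_image.2 fun i _ => (hC i).1 (hnext i β hβ).1)
    obtain ⟨δ, hδ, hoδ, hδF⟩ := exists_gt_forall_lt_apply_lt hF ho
    refine ⟨δ, ⟨hδ, fun i hi => (hC i).mem_of_cofinal hδ ((zero_le (a := o)).trans_lt hoδ)
      fun β hβ => ?_⟩, hoδ⟩
    have hγ : max β (r i) < δ := max_lt hβ hi
    have := ((hr _ (hγ.trans hδ)).image fun j => sInf (C j ∩ Ioi (max β (r i)))).to_subtype
    obtain ⟨hnC, hγn⟩ := hnext i _ (hγ.trans hδ)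
    exact ⟨_, hnC, (le_max_left _ _).trans_lt hγn,
      (le_csSup bddAbove_of_small (mem_image_of_mem (fun j => sInf (C j ∩ Ioi (max β (r i))))
        (le_max_right β (r i)))).trans_lt (hδF _ hγ)⟩
  · obtain ⟨d, -, hdo⟩ := hne
    refine (hC i).mem_of_cofinal ho ((zero_le (a := d)).trans_lt hdo) fun β hβ => ?_
    obtain ⟨d, ⟨hd, hdo⟩, hβd, -⟩ := hlub.exists_between (max_lt hβ hi)
    exact ⟨d, hd.2 i ((le_max_right _ _).trans_lt hβd), (le_max_left _ _).trans_lt hβd, hdo⟩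

lemma IsClubIn.sSup_inter_Iio_lt (hC : IsClubIn C) {α : Ordinal} (hα : α < omega1) (hα0 : 0 < α)
    (hαC : α ∉ C) : sSup (C ∩ Iio α) < α := by
  refine (csSup_le' fun x hx => hx.2.le).lt_of_ne fun h => hαC ?_
  rcases (C ∩ Iio α).eq_empty_or_nonempty with he | hne
  · rw [he, csSup_empty, bot_eq_zero] at h
    exact absurd h hα0.ne
  · have hlub := isLUB_csSup hne bddAbove_of_small
    rw [h] at hlub
    exact hC.2.2 α hα hne hlub

lemma le_of_sSup_inter_Iio_lt {S : Set Ordinal} {α c : Ordinal} (hc : c ∈ S)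
    (h : sSup (S ∩ Iio α) < c) : α ≤ c :=
  not_lt.1 fun hcα => h.not_ge (le_csSup bddAbove_of_small ⟨hc, hcα⟩)

lemma exists_isClubIn_disjoint {S : Set Ordinal} (h : ¬ IsStationaryIn S) :
    ∃ C, IsClubIn C ∧ ∀ o ∈ S, o ∉ C :=
  let ⟨C, hC, hSC⟩ := not_forall₂.1 h
  ⟨C, hC, fun o hoS hoC => hSC ⟨o, hoS, hoC⟩⟩

end Clubs

section Trees

variable {T : Type*} {ht : T → Ordinal}

lemma CountableLevels.countable_setOf_ht_le (hlev : CountableLevels ht) {β : Ordinal}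
    (hβ : β < omega1) : {t | ht t ≤ β}.Countable :=
  ((countable_Iic_of_lt_omega1 hβ).biUnion fun o _ => hlev o).mono
    fun t hβt => mem_biUnion (x := ht t) hβt rfl

variable [PartialOrder T]

lemma IsHeightFun.ht_bot [OrderBot T] (hht : IsHeightFun ht) : ht ⊥ = 0 :=
  nonpos_iff_eq_zero.1 <| not_lt.1 fun h => let ⟨_, hs, _⟩ := hht.2 ⊥ 0 h; not_lt_bot hs

lemma IsHeightFun.ht_pos [OrderBot T] (hht : IsHeightFun ht) {t : T} (h : t ≠ ⊥) : 0 < ht t :=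
  hht.ht_bot ▸ hht.1 ⊥ t h.bot_lt

lemma IsHeightFun.exists_proj (hht : IsHeightFun ht) (g : T → Ordinal) :
    ∃ f : T → T, ∀ t, g t < ht t → f t < t ∧ ht (f t) = g t := by
  have hproj : ∀ t, ∃ s, g t < ht t → s < t ∧ ht s = g t := by
    intro t
    by_cases h : g t < ht t
    · exact (hht.2 t _ h).imp fun _ hs _ => hs
    · exact ⟨t, fun h' => absurd h' h⟩
  choose f hf using hproj
  exact ⟨f, hf⟩

lemma isSpecialSet_of_countable {U : Set T} (hU : U.Countable) : IsSpecialSet U := by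
  rcases U.eq_empty_or_nonempty with rfl | hne
  · exact ⟨fun _ => ∅, fun _ => Set.subsingleton_empty.isAntichain _, empty_subset _⟩
  · obtain ⟨g, rfl⟩ := hU.exists_eq_range hne
    exact ⟨fun n => {g n}, fun _ => IsAntichain.singleton,
      fun _ ⟨n, hn⟩ => mem_iUnion.2 ⟨n, hn.symm⟩⟩

variable [OrderBot T]

theorem not_isStationaryIn_of_inNS (hht : IsHeightFun ht) (hΩ : HeightOmega1 ht)
    (hlev : CountableLevels ht)
    (has : ∀ A : Set T, IsAntichain (· ≤ ·) A → ¬ IsStationaryIn (ht '' A)) {X : Set Ordinal}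
    (hX : InNS {t | ht t ∈ X}) : ¬ IsStationaryIn X := by
  obtain ⟨f, hreg, hfib⟩ := hX
  choose A hA hcov using hfib
  choose C hC hdisj using fun t n => exists_isClubIn_disjoint (has (A t n) (hA t n))
  have hr : ∀ β < omega1, {p : T × ℕ | ht p.1 ≤ β}.Countable := fun β hβ =>
    ((hlev.countable_setOf_ht_le hβ).prod countable_univ).mono
      fun _ hp => mem_prod.2 ⟨hp, mem_univ _⟩
  intro hstat
  obtain ⟨δ, hδX, ⟨hδ, hδC⟩, hδ0⟩ := hstat _
    ((isClubIn_diagonal _ hr fun p => hC p.1 p.2).inter_Ioi (omega_pos 1))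
  obtain ⟨t, rfl⟩ := hΩ.2 δ hδ
  have hft : f t < t :=
    hreg t hδX fun h => (mem_Ioi.1 hδ0).ne' ((congrArg ht h).trans hht.ht_bot)
  obtain ⟨n, hn⟩ := mem_iUnion.1 (hcov (f t) ⟨hδX, rfl⟩)
  exact hdisj (f t) n _ ⟨t, hn, rfl⟩ (hδC (f t, n) (hht.1 _ _ hft))

theorem inNS_of_not_isStationaryIn (hht : IsHeightFun ht) (hΩ : HeightOmega1 ht)
    (hlev : CountableLevels ht) {X : Set Ordinal} (hX : ¬ IsStationaryIn X) :
    InNS {t | ht t ∈ X} := by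
  obtain ⟨C, hC, hXC⟩ := exists_isClubIn_disjoint hX
  obtain ⟨f, hf⟩ := hht.exists_proj fun t => sSup (C ∩ Iio (ht t))
  have hlt : ∀ t, ht t ∈ X → t ≠ ⊥ → sSup (C ∩ Iio (ht t)) < ht t := fun t htX ht0 =>
    hC.sSup_inter_Iio_lt (hΩ.1 t) (hht.ht_pos ht0) (hXC _ htX)
  refine ⟨f, fun t htX ht0 => (hf t (hlt t htX ht0)).1, fun s => ?_⟩
  obtain ⟨c, hcC, hsc⟩ := hC.2.1 (ht s) (hΩ.1 s)
  refine isSpecialSet_of_countable ((hlev.countable_setOf_ht_le (hC.1 hcC)).mono ?_)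
  rintro u ⟨huX, rfl⟩
  rcases eq_or_ne u ⊥ with rfl | hu0
  · exact (hht.ht_bot.trans_le (zero_le (a := c)) :)
  · exact le_of_sSup_inter_Iio_lt hcC ((hf u (hlt u huX hu0)).2 ▸ hsc)

end Trees

theorem stmt17_general {T : Type*} [PartialOrder T] [OrderBot T]
    (ht : T → Ordinal)
    (hht : IsHeightFun ht) (hΩ : HeightOmega1 ht) (hlev : CountableLevels ht)
    (has : ∀ A : Set T, IsAntichain (· ≤ ·) A → ¬ IsStationaryIn (ht '' A)) :
    ∀ X : Set Ordinal, X ⊆ Set.Iio omega1 →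
      (InNS {t : T | ht t ∈ X} ↔ ¬ IsStationaryIn X) :=
  fun _ _ => ⟨not_isStationaryIn_of_inNS hht hΩ hlev has, inNS_of_not_isStationaryIn hht hΩ hlev⟩

/-- Let `T` be an almost-Suslin `ω₁`-tree (the set of heights of every
antichain is nonstationary in `ω₁`). Then for every `X ⊆ ω₁`, `T ↾ X ∈ NS^T` if and only
if `X` is nonstationary in `ω₁`. -/
theorem stmt17 {T : Type*} [PartialOrder T] [OrderBot T]
    (hchain : PredsChain T) (ht : T → Ordinal)
    (hht : IsHeightFun ht) (hΩ : HeightOmega1 ht) (hlev : CountableLevels ht)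
    (has : ∀ A : Set T, IsAntichain (· ≤ ·) A → ¬ IsStationaryIn (ht '' A)) :
    ∀ X : Set Ordinal, X ⊆ Set.Iio omega1 →
      (InNS {t : T | ht t ∈ X} ↔ ¬ IsStationaryIn X) :=
  stmt17_general ht hht hΩ hlev has
end
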